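/- The Jacobian of the single-module M-MGN map g(x) = a + VᵀV x + s(Wx+b)·Wᵀσ(Wx+b), where s is convex, twice continuously differentiable, nonnegative and σ = ∇s, is positive semidefinite everywhere. -/

import Mathlib

/-!
With `u = W x + b`, the product rule gives the bilinear form of the Jacobian `J` of `g` at `x`:
`⟪J v, w⟫ = ⟪V v, V w⟫ + Ds(u)(W v) · Ds(u)(W w) + s(u) · D²s(u)(W v, W w)`.
It is symmetric by the symmetry of second derivatives, and nonnegative on the diagonal: a
squared norm, a square, and `s(u) ≥ 0` times the Hessian of the convex function `s`, which is
positive semidefinite because `s` restricted to a line has a monotone derivative.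
-/

open Set Matrix

theorem ConvexOn.fderiv_fderiv_apply_self_nonneg {E : Type*} [NormedAddCommGroup E]
    [NormedSpace ℝ E] {f : E → ℝ} {z : E} (hf : ConvexOn ℝ univ f) (hd : Differentiable ℝ f)
    (hd2 : DifferentiableAt ℝ (fderiv ℝ f) z) (w : E) :
    0 ≤ fderiv ℝ (fderiv ℝ f) z w w := by
  set γ := AffineMap.lineMap (k := ℝ) z (z + w)
  have hγ0 : γ 0 = z := AffineMap.lineMap_apply_zero _ _
  have hγ : ∀ t, HasDerivAt γ w t := fun t => by
    simpa using AffineMap.hasDerivAt_lineMap (a := z) (b := z + w) (x := t)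
  have hφ : ∀ t, HasDerivAt (f ∘ γ) (fderiv ℝ f (γ t) w) t := fun t =>
    (hd (γ t)).hasFDerivAt.comp_hasDerivAt t (hγ t)
  have hmono : Monotone fun t => fderiv ℝ f (γ t) w := by
    intro t t' htt'
    have := (hf.comp_affineMap γ).monotoneOn_deriv (fun t _ => (hφ t).differentiableAt)
      (mem_univ t) (mem_univ t') htt'
    rwa [(hφ t).deriv, (hφ t').deriv] at this
  have hψ : HasDerivAt (fun t => fderiv ℝ f (γ t) w) (fderiv ℝ (fderiv ℝ f) z w w) 0 := by
    rw [← hγ0] at hd2 ⊢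
    simpa using (hd2.hasFDerivAt.comp_hasDerivAt 0 (hγ 0)).clm_apply (hasDerivAt_const 0 w)
  exact hψ.deriv ▸ hmono.deriv_nonneg

theorem LinearMap.posSemidef_toMatrix'_of_dotProduct {ι : Type*} [Fintype ι] [DecidableEq ι]
    (L : (ι → ℝ) →ₗ[ℝ] ι → ℝ) (hsymm : ∀ v w, w ⬝ᵥ L v = v ⬝ᵥ L w)
    (hnonneg : ∀ v, 0 ≤ v ⬝ᵥ L v) : (LinearMap.toMatrix' L).PosSemidef := by
  refine posSemidef_iff_dotProduct_mulVec.2 ⟨?_, fun v => by simpa using hnonneg v⟩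
  ext i j
  simpa [single_dotProduct] using hsymm (Pi.single i 1) (Pi.single j 1)

theorem LinearMap.apply_single_dotProduct {ι R : Type*} [Fintype ι] [DecidableEq ι]
    [CommSemiring R] (T : (ι → R) →ₗ[R] R) (v : ι → R) : (fun i => T (Pi.single i 1)) ⬝ᵥ v = T v := by
  conv_rhs => rw [← Finset.univ_sum_single v, map_sum]
  refine Finset.sum_congr rfl fun i _ => ?_
  rw [mul_comm, ← smul_eq_mul, ← map_smul, ← Pi.single_smul', smul_eq_mul, mul_one]

theorem Matrix.hasFDerivAt_mulVec {ι κ : Type*} [Fintype ι] (M : Matrix κ ι ℝ)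
    (x : ι → ℝ) : HasFDerivAt (M *ᵥ ·) M.mulVecLin.toContinuousLinearMap x :=
  M.mulVecLin.toContinuousLinearMap.hasFDerivAt

noncomputable section

variable {ι κ π : Type*} [Fintype ι] [Fintype κ] [DecidableEq κ] [Fintype π]

/-- `dualCoords (fderiv ℝ s y)` is the gradient `σ y = ∇s y`. -/
def dualCoords : ((κ → ℝ) →L[ℝ] ℝ) →L[ℝ] κ → ℝ :=
  ContinuousLinearMap.pi fun k => ContinuousLinearMap.apply ℝ ℝ (Pi.single k 1)

theorem dotProduct_dualCoords (T : (κ → ℝ) →L[ℝ] ℝ) (v : κ → ℝ) : dualCoords T ⬝ᵥ v = T v :=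
  (T : (κ → ℝ) →ₗ[ℝ] ℝ).apply_single_dotProduct v

def mmgnMap (a : ι → ℝ) (V : Matrix π ι ℝ) (W : Matrix κ ι ℝ) (b : κ → ℝ)
    (s : (κ → ℝ) → ℝ) (y : ι → ℝ) : ι → ℝ :=
  a + (Vᵀ * V) *ᵥ y + s (W *ᵥ y + b) • Wᵀ *ᵥ dualCoords (fderiv ℝ s (W *ᵥ y + b))

theorem dotProduct_fderiv_mmgnMap (a : ι → ℝ) (V : Matrix π ι ℝ) (W : Matrix κ ι ℝ)
    (b : κ → ℝ) {s : (κ → ℝ) → ℝ} {x : ι → ℝ} (hs : DifferentiableAt ℝ s (W *ᵥ x + b))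
    (hs2 : DifferentiableAt ℝ (fderiv ℝ s) (W *ᵥ x + b)) (v w : ι → ℝ) :
    w ⬝ᵥ fderiv ℝ (mmgnMap a V W b s) x v =
      V *ᵥ v ⬝ᵥ V *ᵥ w + fderiv ℝ s (W *ᵥ x + b) (W *ᵥ w) * fderiv ℝ s (W *ᵥ x + b) (W *ᵥ v)
        + s (W *ᵥ x + b) * fderiv ℝ (fderiv ℝ s) (W *ᵥ x + b) (W *ᵥ v) (W *ᵥ w) := by
  have hu := (W.hasFDerivAt_mulVec x).add_const b
  have hσ := dualCoords.hasFDerivAt.comp x (hs2.hasFDerivAt.comp x hu)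
  have hD := ((hasFDerivAt_const a x).add ((Vᵀ * V).hasFDerivAt_mulVec x)).add
    ((hs.hasFDerivAt.comp x hu).smul ((Wᵀ.hasFDerivAt_mulVec _).comp x hσ))
  rw [(show HasFDerivAt (mmgnMap a V W b s) _ x from hD).fderiv]
  simp only [_root_.add_apply, _root_.smul_apply,
    ContinuousLinearMap.comp_apply, ContinuousLinearMap.smulRight_apply,
    LinearMap.coe_toContinuousLinearMap', mulVecLin_apply, Function.comp_apply,
    zero_add, dotProduct_add, dotProduct_smul, ← mulVec_mulVec,
    dotProduct_transpose_mulVec, dotProduct_dualCoords, smul_eq_mul]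
  ring

end

theorem stmt_12 {m n p : ℕ} (a : Fin n → ℝ) (V : Matrix (Fin p) (Fin n) ℝ)
    (W : Matrix (Fin m) (Fin n) ℝ) (b : Fin m → ℝ)
    (s : (Fin m → ℝ) → ℝ)
    (hconv : ConvexOn ℝ Set.univ s) (hC2 : ContDiff ℝ 2 s) (hnn : ∀ y, 0 ≤ s y) :
    let σ : (Fin m → ℝ) → (Fin m → ℝ) := fun y i => fderiv ℝ s y (Pi.single i 1)
    let g : (Fin n → ℝ) → (Fin n → ℝ) := fun y =>
      a + (V.transpose * V).mulVec y
        + s (W.mulVec y + b) • W.transpose.mulVec (σ (W.mulVec y + b))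
    ∀ x : Fin n → ℝ,
      (Matrix.of fun i j => fderiv ℝ g x (Pi.single j 1) i).PosSemidef := by
  intro σ g x
  -- `g` is `mmgnMap a V W b s` and the Jacobian matrix is `toMatrix'` of its derivative,
  -- both definitionally.
  have hs : Differentiable ℝ s := hC2.differentiable two_ne_zero
  have hs2 : Differentiable ℝ (fderiv ℝ s) :=
    (hC2.fderiv_right le_rfl).differentiable one_ne_zero
  set u := W *ᵥ x + b
  have hJ := dotProduct_fderiv_mmgnMap a V W b (hs u) (hs2 u)
  refine LinearMap.posSemidef_toMatrix'_of_dotProduct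
    (fderiv ℝ (mmgnMap a V W b s) x : (Fin n → ℝ) →ₗ[ℝ] Fin n → ℝ) (fun v w => ?_) (fun v => ?_)
  · rw [ContinuousLinearMap.coe_coe, hJ, hJ, dotProduct_comm (V *ᵥ w),
      second_derivative_symmetric (fun y => (hs y).hasFDerivAt) (hs2 _).hasFDerivAt]
    ring
  · rw [ContinuousLinearMap.coe_coe, hJ]
    have hV : 0 ≤ V *ᵥ v ⬝ᵥ V *ᵥ v := by simpa using dotProduct_star_self_nonneg (V *ᵥ v)
    have hHess := hconv.fderiv_fderiv_apply_self_nonneg hs (hs2 u) (W *ᵥ v)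
    exact add_nonneg (add_nonneg hV (mul_self_nonneg _)) (mul_nonneg (hnn u) hHess)
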